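/- arXiv:1012.0089 — 2 statements merged into one kernel-verified Lean document; each statement's English description precedes it below -/
import Mathlib

section
/- Let θ be a *-automorphism of a unital C*-algebra A, let ω be a free ultrafilter on ℕ, and suppose the induced automorphism θ^ω of the ultrapower A^ω = ℓ^∞(ℕ,A)/c_ω(A) is inner, implemented by a unitary u = (u_n). If there exist nonzero projections p_n in A and unit-norm positive elements a_n ∈ p_n A p_n with ‖p_n u_n p_n − p_n‖ → 0 and ‖a_n θ(a_n)‖ → 0, then one obtains a contradiction; in particular, a·θ^ω(a) = a² u* ≠ 0 in A^ω where a = (a_n), p = (p_n), while a·θ^ω(a) = 0. -/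
/-! Compressing `u n` to the corner `p n A p n` containing `a n` gives `a n * u n * a n ≈ a n * a n`,
which has norm `1`. On the other hand `a n * u n * a n = a n * (u n * a n * (u n)⋆) * u n`, and
innerness makes `u n * a n * (u n)⋆ ≈ θ (a n)`, so this norm is at most about `‖a n * θ (a n)‖ → 0`. -/

theorem IsIdempotentElem.mul_eq_right_of_mul_mul_eq {M : Type*} [Semigroup M] {p a : M}
    (hp : IsIdempotentElem p) (h : p * a * p = a) : p * a = a := by
  rw [← h, ← mul_assoc, ← mul_assoc, hp.eq]

theorem IsIdempotentElem.mul_eq_left_of_mul_mul_eq {M : Type*} [Semigroup M] {p a : M}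
    (hp : IsIdempotentElem p) (h : p * a * p = a) : a * p = a := by
  rw [← h, mul_assoc, hp.eq]

theorem norm_mul_mul_sub_mul_self_le {R : Type*} [NormedRing R] {p a u : R}
    (hpa : p * a = a) (hap : a * p = a) :
    ‖a * u * a - a * a‖ ≤ ‖a‖ * ‖p * u * p - p‖ * ‖a‖ := by
  have hcompress : a * u * a - a * a = a * (p * u * p - p) * a := by
    simp only [mul_sub, sub_mul, ← mul_assoc, hap]
    simp only [mul_assoc, hpa]
  rw [hcompress]
  exact norm_mul₃_le

theorem norm_mul_unitary_mul_le {E : Type*} [NormedRing E] [StarRing E] [CStarRing E]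
    {a b c u : E} (hu : u ∈ unitary E) :
    ‖a * u * c‖ ≤ ‖a * b‖ + ‖a‖ * ‖u * c * star u - b‖ := by
  have hconj : a * u * c = a * (u * c * star u) * u := by
    simp only [mul_assoc, Unitary.star_mul_self_of_mem hu, mul_one]
  have hsplit : a * (u * c * star u) = a * b + a * (u * c * star u - b) := by
    rw [← mul_add, add_sub_cancel]
  rw [hconj, CStarRing.norm_mul_mem_unitary _ hu, hsplit]
  exact (norm_add_le _ _).trans (by gcongr; exact norm_mul_le _ _)

theorem IsSelfAdjoint.norm_mul_norm_le_of_corner {E : Type*} [NormedRing E] [StarRing E]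
    [CStarRing E] {a b p u : E} (ha : IsSelfAdjoint a) (hp : IsIdempotentElem p)
    (hcorner : p * a * p = a) (hu : u ∈ unitary E) :
    ‖a‖ * ‖a‖ ≤ ‖a * b‖ + ‖a‖ * ‖u * a * star u - b‖ + ‖a‖ * ‖p * u * p - p‖ * ‖a‖ := by
  have hcompress := norm_mul_mul_sub_mul_self_le (u := u)
    (hp.mul_eq_right_of_mul_mul_eq hcorner) (hp.mul_eq_left_of_mul_mul_eq hcorner)
  have hinner := norm_mul_unitary_mul_le (a := a) (b := b) (c := a) hu
  calc ‖a‖ * ‖a‖ = ‖a * a‖ := by rw [← CStarRing.norm_star_mul_self, ha.star_eq]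
    _ = ‖a * u * a - (a * u * a - a * a)‖ := by rw [sub_sub_cancel]
    _ ≤ ‖a * u * a‖ + ‖a * u * a - a * a‖ := norm_sub_le _ _
    _ ≤ _ := by linarith

theorem stmt10_general {A : Type} [CStarAlgebra A]
    (θ : A ≃⋆ₐ[ℂ] A)
    (ω : Ultrafilter ℕ)
    (u : ℕ → A) (hu : ∀ n, u n ∈ unitary A)
    (hinner : ∀ x : ℕ → A, (∃ C, ∀ n, ‖x n‖ ≤ C) →
      Filter.Tendsto (fun n => ‖u n * x n * star (u n) - θ (x n)‖) ω (nhds 0))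
    (p : ℕ → A)
    (hproj : ∀ n, IsSelfAdjoint (p n) ∧ p n * p n = p n ∧ p n ≠ 0)
    (a : ℕ → A)
    (hpos : ∀ n, ∃ b, a n = star b * b)
    (hnorm : ∀ n, ‖a n‖ = 1)
    (hcorner : ∀ n, p n * a n * p n = a n)
    (hpu : Filter.Tendsto (fun n => ‖p n * u n * p n - p n‖) ω (nhds 0))
    (haθ : Filter.Tendsto (fun n => ‖a n * θ (a n)‖) ω (nhds 0)) :
    False := by
  have hbound : ∀ n, (1 : ℝ) ≤ ‖a n * θ (a n)‖ + ‖u n * a n * star (u n) - θ (a n)‖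
      + ‖p n * u n * p n - p n‖ := by
    intro n
    have hsa : IsSelfAdjoint (a n) := by
      obtain ⟨b, hb⟩ := hpos n
      exact hb ▸ IsSelfAdjoint.star_mul_self b
    simpa [hnorm n] using
      hsa.norm_mul_norm_le_of_corner (b := θ (a n)) (hproj n).2.1 (hcorner n) (hu n)
  have hlim : Filter.Tendsto (fun n => ‖a n * θ (a n)‖ + ‖u n * a n * star (u n) - θ (a n)‖
      + ‖p n * u n * p n - p n‖) ω (nhds 0) := by
    simpa using (haθ.add (hinner a ⟨1, fun n => (hnorm n).le⟩)).add hpu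
  linarith [ge_of_tendsto' hlim hbound]

/-- Let `θ` be a *-automorphism of a unital C*-algebra `A` and `ω` a free ultrafilter on `ℕ`.
Suppose the induced automorphism of the ultrapower `A^ω` is inner, implemented by a unitary
`u = (u n)` (so that `‖u n * x n * (u n)* - θ (x n)‖ → 0` along `ω` for every bounded
sequence `x`).  If there are nonzero projections `p n` and norm-one positive elements
`a n ∈ p n A p n` with `‖p n * u n * p n - p n‖ → 0` and `‖a n * θ (a n)‖ → 0` along `ω`,
then one obtains a contradiction. -/
theorem stmt10 {A : Type} [CStarAlgebra A]
    (θ : A ≃⋆ₐ[ℂ] A)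
    (ω : Ultrafilter ℕ) (hfree : (ω : Filter ℕ) ≤ Filter.cofinite)
    (u : ℕ → A) (hu : ∀ n, u n ∈ unitary A)
    (hinner : ∀ x : ℕ → A, (∃ C, ∀ n, ‖x n‖ ≤ C) →
      Filter.Tendsto (fun n => ‖u n * x n * star (u n) - θ (x n)‖) ω (nhds 0))
    (p : ℕ → A)
    (hproj : ∀ n, IsSelfAdjoint (p n) ∧ p n * p n = p n ∧ p n ≠ 0)
    (a : ℕ → A)
    (hpos : ∀ n, ∃ b, a n = star b * b)
    (hnorm : ∀ n, ‖a n‖ = 1)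
    (hcorner : ∀ n, p n * a n * p n = a n)
    (hpu : Filter.Tendsto (fun n => ‖p n * u n * p n - p n‖) ω (nhds 0))
    (haθ : Filter.Tendsto (fun n => ‖a n * θ (a n)‖) ω (nhds 0)) :
    False :=
  stmt10_general θ ω u hu hinner p hproj a hpos hnorm hcorner hpu haθ
end

section
/- Let G be a finite group acting by β on a unital C*-algebra B, let α be a quasi-free action of G on O_n with associated unitary representation π_α on ℂ^n, and let φ : O_n → B be a unital G-equivariant *-homomorphism. Identify B(ℂ^n) with the span of s_i s_j^*. Then for every x in the fixed-point algebra B^G, the identity (1/|G|) ∑_{g∈G} ∑_{i=1}^n φ(α_g(s_i)) λ^β_g x φ(s_i)^* = ( (1/|G|) ∑_{g∈G} λ^β_g ) · ∑_{i=1}^n φ(s_i) x φ(s_i)^* holds in the crossed product B ⋊_β G. -/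
/-- The key computation `j_β ∘ Λ_φ = ρ ∘ β̂_{π_α} ∘ j_β` on `B^G`: with `β` an action of a
finite group `G` on a unital C*-algebra `B` realized in a crossed product `C = B ⋊_β G`
(embedding `ι`, implementing unitaries `lam g`), `π` a unitary representation of `G` on
`ℂⁿ`, and `S i = φ(s_i)` the Cuntz family of a unital `G`-equivariant *-homomorphism
`φ : O_n → B` for the quasi-free action attached to `π`, one has, for every `x ∈ B^G`,
`(1/|G|) ∑ g ∑ i, φ(α_g(s_i)) λ_g x φ(s_i)* = ((1/|G|) ∑ g, λ_g) · ∑ i, φ(s_i) x φ(s_i)*`. -/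
theorem stmt19 {G : Type} [Group G] [Fintype G]
    {B : Type} [CStarAlgebra B] {C : Type} [CStarAlgebra C]
    (β : G → B ≃⋆ₐ[ℂ] B)
    (hβ1 : ∀ x, β 1 x = x) (hβmul : ∀ g h x, β (g * h) x = β g (β h x))
    (ι : B →⋆ₐ[ℂ] C) (lam : G → C)
    (hlu : ∀ g, lam g ∈ unitary C) (hlmul : ∀ g h, lam g * lam h = lam (g * h))
    (hl1 : lam 1 = 1)
    (hcov : ∀ g b, lam g * ι b = ι (β g b) * lam g)
    {n : ℕ} (π : G → Matrix (Fin n) (Fin n) ℂ)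
    (hπu : ∀ g, π g ∈ Matrix.unitaryGroup (Fin n) ℂ)
    (hπmul : ∀ g h, π g * π h = π (g * h)) (hπ1 : π 1 = 1)
    (S : Fin n → B)
    (hS : ∀ i j, star (S i) * S j = if i = j then 1 else 0)
    (hS1 : ∑ i, S i * star (S i) = 1)
    (hSe : ∀ g i, β g (S i) = ∑ j, π g j i • S j) :
    ∀ x : B, (∀ g, β g x = x) →
      (Fintype.card G : ℂ)⁻¹ •
          ∑ g, ∑ i, ι (β g (S i)) * (lam g * (ι x * ι (star (S i)))) =
        ((Fintype.card G : ℂ)⁻¹ • ∑ g, lam g) *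
          ∑ i, ι (S i) * ι x * ι (star (S i)) := by
  intro x hx
  rw [smul_mul_assoc, Finset.sum_mul]
  congr 1
  refine Finset.sum_congr rfl fun g _ => ?_
  rw [Finset.mul_sum]
  refine Finset.sum_congr rfl fun i _ => ?_
  rw [← mul_assoc, ← hcov g (S i)]
  simp [mul_assoc]
end
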